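/- Let R be a commutative ℚ-algebra, D : R → R a derivation extended coefficientwise to R[X], c ∈ R, and for an integer K let ∇_K f = D f − (X² − c) f′ + K X f. Fix integers k and m ≥ 0 with 2m < k. For 0 ≤ j ≤ m let ∇^{(j)} := ∇_{k−2} ∘ ∇_{k−4} ∘ ⋯ ∘ ∇_{k−2j} (j factors, so ∇^{(j)} maps 'weight k−2j' to 'weight k'; ∇^{(0)} = id). Then every polynomial f ∈ R[X] of degree ≤ m can be written uniquely as f = Σ_{j=0}^{m} ∇^{(j)} g_j with g_0, …, g_m ∈ R (constant polynomials). -/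
import Mathlib


open Polynomial

/-- The Gauss–Manin connection in local coordinates, with integer weight. -/
noncomputable def nabla {R : Type*} [CommRing R]
    (Dp : R[X] → R[X]) (c : R) (K : ℤ) (f : R[X]) : R[X] :=
  Dp f - (X ^ 2 - C c) * derivative f + C ((K : ℤ) : R) * X * f

/-- `∇^{(j)} = ∇_{k-2} ∘ ∇_{k-4} ∘ ⋯ ∘ ∇_{k-2j}`. -/
noncomputable def nablaDesc {R : Type*} [CommRing R]
    (Dp : R[X] → R[X]) (c : R) (k : ℤ) : ℕ → R[X] → R[X]
  | 0, f => f
  | j + 1, f => nablaDesc Dp c k j (nabla Dp c (k - 2 * (j + 1)) f)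

def uu (k : ℤ) : ℕ → ℕ → ℤ
  | 0, _ => 1
  | j + 1, n => uu k j (n + 1) * (k - 2 * (j + 1) - n)

lemma uu_pos (k : ℤ) : ∀ (j n : ℕ), 2 * (j : ℤ) + n < k → 0 < uu k j n := by
  intro j
  induction j with
  | zero => intro n _; simp [uu]
  | succ j ih =>
    intro n h
    have h1 : 0 < uu k j (n + 1) := ih (n + 1) (by push_cast; push_cast at h; linarith)
    simp only [uu]
    apply mul_pos h1
    push_cast at h ⊢
    linarith

section
variable {R : Type*} [CommRing R]

lemma isUnit_int [Algebra ℚ R] (z : ℤ) (hz : z ≠ 0) : IsUnit ((z : ℤ) : R) := by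
  have h2 : IsUnit (z : ℚ) := isUnit_iff_ne_zero.2 (by exact_mod_cast hz)
  have := h2.map (algebraMap ℚ R)
  rwa [map_intCast] at this

lemma coeff_X2_mul_one (g : R[X]) : (X ^ 2 * g).coeff 1 = 0 := by
  have h : (X ^ 2 * g : R[X]) = X * (X * g) := by ring
  rw [h, show (1 : ℕ) = 0 + 1 from rfl, coeff_X_mul, mul_coeff_zero, coeff_X_zero, zero_mul]

variable (D : R → R) (Dp : R[X] → R[X])

lemma degree_nabla_le (hD0 : D 0 = 0)
    (hDp : ∀ (f : R[X]) (i : ℕ), (Dp f).coeff i = D (f.coeff i)) (c : R) (K : ℤ) (f : R[X]) (n : ℕ) (hf : f.degree ≤ (n : ℕ)) :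
    (nabla Dp c K f).degree ≤ ((n + 1 : ℕ) : WithBot ℕ) := by
  rw [degree_le_iff_coeff_zero]
  intro i hi
  have hi' : n + 1 < i := by exact_mod_cast hi
  obtain ⟨j, rfl⟩ : ∃ j, i = j + 2 := ⟨i - 2, by omega⟩
  have hfc : ∀ t, n < t → f.coeff t = 0 := fun t ht =>
    coeff_eq_zero_of_degree_lt (lt_of_le_of_lt hf (by exact_mod_cast ht))
  have e1 : (Dp f).coeff (j + 2) = 0 := by rw [hDp, hfc _ (by omega), hD0]
  have e2 : ((X ^ 2 - C c) * derivative f).coeff (j + 2) = 0 := by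
    rw [sub_mul, coeff_sub, coeff_X_pow_mul, coeff_C_mul, coeff_derivative, coeff_derivative,
      hfc _ (by omega), hfc _ (by omega)]
    ring
  have e3 : (C ((K : ℤ) : R) * X * f).coeff (j + 2) = 0 := by
    rw [mul_assoc, coeff_C_mul, show j + 2 = (j + 1) + 1 from rfl, coeff_X_mul,
      hfc _ (by omega)]
    ring
  simp only [nabla, coeff_add, coeff_sub, e1, e2, e3]
  ring

lemma coeff_nabla_top (hD0 : D 0 = 0)
    (hDp : ∀ (f : R[X]) (i : ℕ), (Dp f).coeff i = D (f.coeff i)) (c : R) (K : ℤ) (f : R[X]) (n : ℕ) (hf : f.degree ≤ (n : ℕ)) :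
    (nabla Dp c K f).coeff (n + 1) = ((K - n : ℤ) : R) * f.coeff n := by
  have hfc : ∀ t, n < t → f.coeff t = 0 := fun t ht =>
    coeff_eq_zero_of_degree_lt (lt_of_le_of_lt hf (by exact_mod_cast ht))
  have e1 : (Dp f).coeff (n + 1) = 0 := by rw [hDp, hfc _ (by omega), hD0]
  have e3 : (C ((K : ℤ) : R) * X * f).coeff (n + 1) = ((K : ℤ) : R) * f.coeff n := by
    rw [mul_assoc, coeff_C_mul, coeff_X_mul]
  have e2 : ((X ^ 2 - C c) * derivative f).coeff (n + 1) = (n : R) * f.coeff n := by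
    rw [sub_mul, coeff_sub, coeff_C_mul, coeff_derivative, hfc _ (by omega)]
    cases n with
    | zero => rw [coeff_X2_mul_one]; simp
    | succ d =>
      rw [show d + 1 + 1 = d + 2 from rfl, coeff_X_pow_mul, coeff_derivative]
      push_cast
      ring
  simp only [nabla, coeff_add, coeff_sub, e1, e2, e3]
  push_cast
  ring

lemma nablaDesc_spec (hD0 : D 0 = 0)
    (hDp : ∀ (f : R[X]) (i : ℕ), (Dp f).coeff i = D (f.coeff i)) (c : R) (k : ℤ) : ∀ (j n : ℕ) (f : R[X]), f.degree ≤ (n : ℕ) →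
    (nablaDesc Dp c k j f).degree ≤ ((n + j : ℕ) : WithBot ℕ) ∧
      (nablaDesc Dp c k j f).coeff (n + j) = ((uu k j n : ℤ) : R) * f.coeff n := by
  intro j
  induction j with
  | zero => intro n f hf; simp [nablaDesc, uu, hf]
  | succ j ih =>
    intro n f hf
    have hb := degree_nabla_le D Dp hD0 hDp c (k - 2 * ((j : ℤ) + 1)) f n hf
    obtain ⟨d1, d2⟩ := ih (n + 1) (nabla Dp c (k - 2 * ((j : ℤ) + 1)) f) hb
    have hdef : nablaDesc Dp c k (j + 1) f
        = nablaDesc Dp c k j (nabla Dp c (k - 2 * ((j : ℤ) + 1)) f) := by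
      simp only [nablaDesc]
    constructor
    · rw [hdef, show n + (j + 1) = n + 1 + j from by omega]
      exact d1
    · rw [hdef, show n + (j + 1) = n + 1 + j from by omega, d2,
        coeff_nabla_top D Dp hD0 hDp c _ f n hf]
      simp only [uu]
      push_cast
      ring

lemma key [Algebra ℚ R] (hD0 : D 0 = 0)
    (hDp : ∀ (f : R[X]) (i : ℕ), (Dp f).coeff i = D (f.coeff i)) (c : R) (k : ℤ) :
    ∀ m : ℕ, 2 * (m : ℤ) < k → ∀ f : R[X], f.degree ≤ (m : ℕ) →
    ∃! g : Fin (m + 1) → R,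
      f = ∑ j : Fin (m + 1), nablaDesc Dp c k (j : ℕ) (C (g j)) := by
  intro m
  induction m with
  | zero =>
    intro _ f hf
    refine ⟨fun _ => f.coeff 0, ?_, ?_⟩
    · simpa [nablaDesc] using eq_C_of_degree_le_zero (by simpa using hf)
    · intro y hy
      funext i
      have h0 : f.coeff 0 = y 0 := by rw [hy]; simp [nablaDesc, coeff_C]
      have hi : i = 0 := Fin.ext (by omega)
      rw [hi]
      exact h0.symm
  | succ m ih =>
    intro hk f hf
    have hk' : 2 * (m : ℤ) < k := by push_cast at hk ⊢; linarith
    have hu : (0 : ℤ) < uu k (m + 1) 0 := uu_pos k (m + 1) 0 (by push_cast at hk ⊢; linarith)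
    have hvu : IsUnit ((uu k (m + 1) 0 : ℤ) : R) := isUnit_int _ (by omega)
    set U : R := ((uu k (m + 1) 0 : ℤ) : R) with hUdef
    set a : R := (hvu.unit⁻¹ : Rˣ) * f.coeff (m + 1) with ha
    have hUinv : U * (hvu.unit⁻¹ : Rˣ) = 1 := hvu.mul_val_inv
    have hUa : U * a = f.coeff (m + 1) := by rw [ha, ← mul_assoc, hUinv, one_mul]
    have hspec : ∀ (jn : ℕ) (b : R),
        (nablaDesc Dp c k jn (C b)).degree ≤ ((jn : ℕ) : WithBot ℕ) ∧
          (nablaDesc Dp c k jn (C b)).coeff jn = ((uu k jn 0 : ℤ) : R) * b := by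
      intro jn b
      have := nablaDesc_spec D Dp hD0 hDp c k jn 0 (C b) (by simpa using degree_C_le)
      simpa using this
    set F : R[X] := f - nablaDesc Dp c k (m + 1) (C a) with hFdef
    have hFdeg : F.degree ≤ ((m : ℕ) : WithBot ℕ) := by
      rw [degree_le_iff_coeff_zero]
      intro i hi
      have him : (m : ℕ) < i := by exact_mod_cast hi
      rw [hFdef, coeff_sub]
      rcases eq_or_lt_of_le (Nat.succ_le_of_lt him) with h | h
      · rw [← h, (hspec (m + 1) a).2, ← hUdef, hUa, sub_self]
      · rw [coeff_eq_zero_of_degree_lt (lt_of_le_of_lt hf (by exact_mod_cast h)),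
          coeff_eq_zero_of_degree_lt (lt_of_le_of_lt (hspec (m + 1) a).1
            (by exact_mod_cast h)), sub_zero]
    obtain ⟨g', hg'1, hg'2⟩ := ih hk' F hFdeg
    refine ⟨Fin.snoc g' a, ?_, ?_⟩
    · show f = ∑ j : Fin (m + 1 + 1), nablaDesc Dp c k (j : ℕ) (C ((Fin.snoc g' a : Fin (m + 1 + 1) → R) j))
      rw [Fin.sum_univ_castSucc]
      simp only [Fin.snoc_castSucc, Fin.snoc_last, Fin.coe_castSucc, Fin.val_last]
      rw [← hg'1, hFdef]
      ring
    · intro y hy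
      replace hy : f = ∑ j : Fin (m + 1 + 1), nablaDesc Dp c k (j : ℕ) (C (y j)) := hy
      have hylast : y (Fin.last (m + 1)) = a := by
        have hcoeff : f.coeff (m + 1) = U * y (Fin.last (m + 1)) := by
          rw [hy, finset_sum_coeff, Finset.sum_eq_single (Fin.last (m + 1))]
          · simpa [Fin.val_last] using (hspec (m + 1) (y (Fin.last (m + 1)))).2
          · intro b _ hb
            have hbne : (b : ℕ) ≠ m + 1 := fun h => hb (Fin.ext (by simp [h]))
            have hbv : (b : ℕ) < m + 1 := by have := b.isLt; omega
            exact coeff_eq_zero_of_degree_lt (lt_of_le_of_lt (hspec (b : ℕ) (y b)).1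
              (by exact_mod_cast hbv))
          · simp
        have h2 : U * y (Fin.last (m + 1)) = U * a := by rw [← hcoeff, hUa]
        exact hvu.mul_right_inj.mp h2
      have hyF : F = ∑ j : Fin (m + 1), nablaDesc Dp c k (j : ℕ) (C (y j.castSucc)) := by
        rw [hFdef, hy, Fin.sum_univ_castSucc]
        simp only [Fin.coe_castSucc, Fin.val_last, hylast]
        ring
      have hgy := hg'2 (fun j => y j.castSucc) hyF
      funext i
      refine Fin.lastCases ?_ ?_ i
      · rw [hylast]; simp [Fin.snoc_last]
      · intro j
        rw [Fin.snoc_castSucc]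
        exact congrFun hgy j

end

/-- Unique decomposition of nearly overconvergent forms (polynomial model). -/
theorem stmt7 (R : Type*) [CommRing R] [Algebra ℚ R] (D : R → R)
    (hadd : ∀ x y, D (x + y) = D x + D y)
    (hmul : ∀ x y, D (x * y) = D x * y + x * D y)
    (Dp : R[X] → R[X])
    (hDp : ∀ (f : R[X]) (i : ℕ), (Dp f).coeff i = D (f.coeff i))
    (c : R) (k : ℤ) (m : ℕ) (hkm : 2 * (m : ℤ) < k)
    (f : R[X]) (hdeg : f.degree ≤ (m : ℕ)) :
    ∃! g : Fin (m + 1) → R,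
      f = ∑ j : Fin (m + 1), nablaDesc Dp c k (j : ℕ) (C (g j)) := by
  have hD0 : D 0 = 0 := by have := hadd 0 0; simpa using this
  exact key D Dp hD0 hDp c k m hkm f hdeg
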